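/- Let n ≥ 1 be an integer. The derivative B'_n(x) of the n-th Bernoulli polynomial has only integral coefficients (B'_n(x) ∈ ℤ[x]) if and only if D̂_n = 1, which in turn holds if and only if DB_{n−1} = rad(n). Moreover, in these cases the number n+1 is prime. -/

import Mathlib

/-- A rational polynomial has only integral coefficients. -/
def IsIntPoly (f : Polynomial ℚ) : Prop := ∀ i, (f.coeff i).den = 1

/-- The least positive integer `d` such that `d • f` has only integral coefficients. -/
noncomputable def polyDenom (f : Polynomial ℚ) : ℕ :=
  sInf {d : ℕ | 0 < d ∧ IsIntPoly ((d : ℚ) • f)}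

/-- Sum of base-`p` digits of `n`. -/
def sd (p n : ℕ) : ℕ := (Nat.digits p n).sum

/-- Radical (squarefree kernel) of `n`. -/
def rad (n : ℕ) : ℕ := ∏ p ∈ n.primeFactors, p

/-- `D n = denom (B_n(x) - B_n)`. -/
noncomputable def D (n : ℕ) : ℕ :=
  polyDenom (Polynomial.bernoulli n - Polynomial.C (bernoulli n))

/-- `DB n = denom (B_n(x))`. -/
noncomputable def DB (n : ℕ) : ℕ := polyDenom (Polynomial.bernoulli n)

/-- `D̂ n`: product of primes `p` with `p ∤ n` and `s_p(n) ≥ p`.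
(Any such prime satisfies `p ≤ s_p(n) ≤ n`.) -/
def Dhat (n : ℕ) : ℕ :=
  ∏ p ∈ (Finset.range (n + 1)).filter (fun p => p.Prime ∧ ¬ p ∣ n ∧ p ≤ sd p n), p

/-- `D̃ n`: product of primes `p` with `p ∣ n` and `s_p(n) ≥ p`. -/
def Dtilde (n : ℕ) : ℕ :=
  ∏ p ∈ (Finset.range (n + 1)).filter (fun p => p.Prime ∧ p ∣ n ∧ p ≤ sd p n), p

/-- `Ď n`: product of primes `p` with `p ∣ n` and `s_p(n) < p`. -/
def Dcheck (n : ℕ) : ℕ :=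
  ∏ p ∈ (Finset.range (n + 1)).filter (fun p => p.Prime ∧ p ∣ n ∧ sd p n < p), p

/-- `D⁺ n`: product of primes `p` with `p > √n` and `s_p(n) ≥ p`. -/
def Dplus (n : ℕ) : ℕ :=
  ∏ p ∈ (Finset.range (n + 1)).filter (fun p => p.Prime ∧ n < p ^ 2 ∧ p ≤ sd p n), p

/-- The sum-of-powers polynomial `S_n(x) = (B_{n+1}(x) - B_{n+1}) / (n+1)`. -/
noncomputable def Spoly (n : ℕ) : Polynomial ℚ :=
  Polynomial.C (((n : ℚ) + 1)⁻¹) *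
    (Polynomial.bernoulli (n + 1) - Polynomial.C (bernoulli (n + 1)))


/-!
By von Staudt–Clausen, `p B_m` is `p`-integral for every `m`, and for `m = 1` or even `m > 0`
the prime `p` divides the denominator of `B_m` exactly when `(p - 1) ∣ m`. The coefficient of
`x ^ (N - m)` in `B_N(x)` is `C(N, m) B_m`, and by Kummer `p ∣ C(N, m)` exactly when
`s_p(m) + s_p(N - m) > s_p(N)`. If `s_p(N) < p - 1`, every `m > 0` with `(p - 1) ∣ m` has
`s_p(m) ≥ p - 1`, so `p ∣ C(N, m)` cancels the `p` of `B_m`. If `s_p(N) ≥ p - 1`, lowering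
base-`p` digits of `N` gives an `m` with `s_p(m) = p - 1` and `s_p(m) + s_p(N - m) = s_p(N)`,
whose coefficient keeps it. Hence `denom B_N(x) = ∏_{s_p(N) ≥ p - 1} p`.

As `B'_n = n B_{n-1}`, `s_p(n) = s_p(n - 1) + 1` for `p ∤ n`, and `s_p(n - 1) ≥ p - 1` for
`p ∣ n`, each of the three conditions says that every prime `p` with `s_p(n - 1) ≥ p - 1`
divides `n`. If moreover `n + 1 = q a` with `q` prime and `a ≥ 2`, then `q ∤ n` and
`s_q(n) = q - 1 + s_q(a - 1) ≥ q`, a contradiction.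
-/

section DigitSum

variable {p : ℕ}

lemma sd_zero (p : ℕ) : sd p 0 = 0 := by simp [sd]

lemma sd_add_mul (hp : 1 < p) {r : ℕ} (hr : r < p) (q : ℕ) : sd p (r + p * q) = r + sd p q := by
  by_cases h : r = 0 ∧ q = 0
  · simp [h, sd]
  · rw [sd, Nat.digits_add p hp r q hr (by tauto), List.sum_cons, sd]

lemma sd_of_lt (hp : 1 < p) {r : ℕ} (hr : r < p) : sd p r = r := by
  simpa [sd_zero] using sd_add_mul hp hr 0

lemma sd_mul (hp : 1 < p) (q : ℕ) : sd p (p * q) = sd p q := by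
  simpa using sd_add_mul hp (by omega : 0 < p) q

lemma sd_pos (p : ℕ) {n : ℕ} (hn : n ≠ 0) : 0 < sd p n :=
  (Nat.pos_of_ne_zero (Nat.getLast_digit_ne_zero p hn)).trans_le
    (List.le_sum_of_mem (List.getLast_mem _))

lemma sd_le (p n : ℕ) : sd p n ≤ n := Nat.digit_sum_le p n

lemma sd_modEq (hp : 1 < p) (n : ℕ) : sd p n ≡ n [MOD p - 1] := by
  rcases (show p = 2 ∨ 2 < p by omega) with rfl | hp2
  · exact Nat.modEq_one
  · refine (Nat.modEq_digits_sum (p - 1) p ?_ n).symm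
    nth_rewrite 1 [show p = 1 + (p - 1) by omega]
    rw [Nat.add_mod_right, Nat.mod_eq_of_lt (by omega)]

lemma sd_succ_of_not_dvd (hp : 1 < p) {N : ℕ} (h : ¬ p ∣ N + 1) :
    sd p (N + 1) = sd p N + 1 := by
  have hr : N % p + 1 < p := by
    have := Nat.mod_lt N (by omega : 0 < p)
    have : N % p + 1 ≠ p := fun he => h (by
      rw [Nat.dvd_iff_mod_eq_zero, ← Nat.mod_add_div N p, add_right_comm, he]; simp)
    omega
  conv_lhs => rw [← Nat.mod_add_div N p, add_right_comm]
  conv_rhs => rw [← Nat.mod_add_div N p]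
  rw [sd_add_mul hp hr, sd_add_mul hp (by omega)]
  omega

lemma sub_one_le_sd_of_dvd_succ (hp : 1 < p) {N : ℕ} (h : p ∣ N + 1) : p - 1 ≤ sd p N := by
  obtain ⟨a, ha⟩ := h
  obtain ⟨b, rfl⟩ : ∃ b, a = b + 1 := Nat.exists_eq_succ_of_ne_zero (by rintro rfl; omega)
  have hN : N = (p - 1) + p * b := by rw [Nat.mul_succ] at ha; omega
  rw [hN, sd_add_mul hp (by omega)]
  omega

lemma exists_sd_eq_of_le (hp : 1 < p) (N : ℕ) {t : ℕ} (ht : t ≤ sd p N) :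
    ∃ m ≤ N, sd p m = t ∧ sd p m + sd p (N - m) = sd p N := by
  induction N using Nat.strong_induction_on generalizing t with
  | _ N ih =>
  set r := N % p
  set q := N / p
  have hr : r < p := Nat.mod_lt N (by omega)
  have hN : N = r + p * q := (Nat.mod_add_div N p).symm
  have hsdN : sd p N = r + sd p q := by rw [hN, sd_add_mul hp hr]
  rcases le_or_gt t r with htr | htr
  · refine ⟨t, by omega, sd_of_lt hp (by omega), ?_⟩
    rw [show N - t = (r - t) + p * q by omega, sd_add_mul hp (by omega), sd_of_lt hp (by omega)]
    omega
  · have hq : q < N := by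
      rcases Nat.eq_zero_or_pos q with h0 | h0
      · rw [h0, sd_zero] at hsdN; omega
      · have : q < p * q := lt_mul_left h0 hp
        omega
    obtain ⟨m, hmq, hm, hsum⟩ := ih q hq (t := t - r) (by omega)
    have hpm : p * m ≤ p * q := Nat.mul_le_mul_left p hmq
    have hpqm : p * (q - m) = p * q - p * m := Nat.mul_sub p q m
    refine ⟨r + p * m, by omega, by rw [sd_add_mul hp hr, hm]; omega, ?_⟩
    rw [show N - (r + p * m) = p * (q - m) by omega, sd_mul hp, sd_add_mul hp hr]
    omega

lemma even_or_eq_one_of_sd_eq_sub_one (hp : p.Prime) {m : ℕ} (h : sd p m = p - 1) :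
    Even m ∨ m = 1 := by
  rcases hp.eq_two_or_odd with rfl | hodd
  · have hsplit := sd_add_mul one_lt_two (Nat.mod_lt m two_pos) (m / 2)
    rw [Nat.mod_add_div, h] at hsplit
    rcases Nat.mod_two_eq_zero_or_one m with h0 | h1
    · exact Or.inl (Nat.even_iff.2 h0)
    · have : m / 2 = 0 := by
        by_contra hne
        have := sd_pos 2 hne
        omega
      omega
  · have := Nat.modEq_digits_sum 2 p hodd m
    rw [← sd, h, Nat.ModEq] at this
    left; rw [Nat.even_iff]; omega

lemma prime_dvd_choose_iff_sd_lt (hp : p.Prime) {N m : ℕ} (hm : m ≤ N) :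
    p ∣ N.choose m ↔ sd p N < sd p m + sd p (N - m) := by
  have := Fact.mk hp
  have kummer := sub_one_mul_padicValNat_choose_eq_sub_sum_digits (p := p) hm
  rw [dvd_iff_padicValNat_ne_zero (Nat.choose_pos hm).ne', ← mul_ne_zero_iff_left
    (show p - 1 ≠ 0 by have := hp.two_le; omega), kummer]
  unfold sd
  omega

end DigitSum

namespace Rat

lemma den_natCast_mul_eq_one_iff (d : ℕ) (x : ℚ) : ((d : ℚ) * x).den = 1 ↔ x.den ∣ d := by
  have hx : (d : ℚ) * x = ((d * x.num : ℤ) : ℚ) / ((x.den : ℤ) : ℚ) := by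
    push_cast; rw [mul_div_assoc, Rat.num_div_den]
  rw [hx, Rat.den_div_intCast_eq_one_iff _ _ (by exact_mod_cast x.den_nz), Int.natCast_dvd,
    Int.natAbs_mul, Int.natAbs_natCast, x.reduced.symm.dvd_mul_right]

lemma den_natCast_mul_dvd (d : ℕ) (x : ℚ) : ((d : ℚ) * x).den ∣ x.den := by
  simpa using Rat.mul_den_dvd (d : ℚ) x

variable {p : ℕ}

lemma not_dvd_den_intCast (hp : p.Prime) (z : ℤ) : ¬ p ∣ (z : ℚ).den := by
  simpa using hp.one_lt.ne'

lemma not_dvd_den_natCast (hp : p.Prime) (n : ℕ) : ¬ p ∣ (n : ℚ).den := by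
  exact_mod_cast not_dvd_den_intCast hp n

lemma not_dvd_den_add (hp : p.Prime) {x y : ℚ} (hx : ¬ p ∣ x.den) (hy : ¬ p ∣ y.den) :
    ¬ p ∣ (x + y).den :=
  fun h => (hp.dvd_mul.1 (h.trans (Rat.add_den_dvd x y))).elim hx hy

lemma not_dvd_den_mul (hp : p.Prime) {x y : ℚ} (hx : ¬ p ∣ x.den) (hy : ¬ p ∣ y.den) :
    ¬ p ∣ (x * y).den :=
  fun h => (hp.dvd_mul.1 (h.trans (Rat.mul_den_dvd x y))).elim hx hy

lemma not_dvd_den_sum (hp : p.Prime) {ι : Type*} {s : Finset ι} {f : ι → ℚ}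
    (h : ∀ i ∈ s, ¬ p ∣ (f i).den) : ¬ p ∣ (∑ i ∈ s, f i).den :=
  Finset.sum_induction f (fun x => ¬ p ∣ x.den) (fun _ _ => not_dvd_den_add hp)
    (not_dvd_den_intCast hp 0) h

lemma dvd_den_natCast_mul (hp : p.Prime) {a : ℕ} (ha : ¬ p ∣ a) {x : ℚ} (hx : p ∣ x.den) :
    p ∣ ((a : ℚ) * x).den := by
  have ha0 : a ≠ 0 := by rintro rfl; exact ha (dvd_zero p)
  have hden : x.den ∣ a * ((a : ℚ) * x).den := by
    simpa [inv_mul_cancel_left₀, ha0] using Rat.mul_den_dvd ((a : ℚ)⁻¹) ((a : ℚ) * x)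
  exact (hp.dvd_mul.1 (hx.trans hden)).resolve_left ha

end Rat

section BernoulliNumbers

variable {p : ℕ}

lemma exists_bernoulli_eq_sub_inv (hp : p.Prime) {m : ℕ} (hm : Even m ∨ m = 1)
    (hm0 : m ≠ 0) :
    ∃ x : ℚ, ¬ p ∣ x.den ∧ bernoulli m = x - if (p - 1) ∣ m then (p : ℚ)⁻¹ else 0 := by
  rcases hm with ⟨k, rfl⟩ | rfl
  · obtain ⟨T, hT⟩ := Bernoulli.vonStaudt_clausen k
    set S := (Finset.range (2 * k + 2)).filter (fun q => q.Prime ∧ (q - 1) ∣ 2 * k)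
    have hpS : p ∈ S ↔ (p - 1) ∣ 2 * k := by
      refine ⟨fun h => (Finset.mem_filter.1 h).2.2, fun h => Finset.mem_filter.2
        ⟨Finset.mem_range.2 ?_, hp, h⟩⟩
      have := Nat.le_of_dvd (by omega) h
      omega
    -- the terms `1 / q` with `q ≠ p` of the von Staudt–Clausen sum are `p`-integral
    refine ⟨T - ∑ q ∈ S with q ≠ p, (1 : ℚ) / q, ?_, ?_⟩
    · rw [sub_eq_add_neg, ← Finset.sum_neg_distrib]
      refine Rat.not_dvd_den_add hp (Rat.not_dvd_den_intCast hp T)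
        (Rat.not_dvd_den_sum hp fun q hq => ?_)
      obtain ⟨hqS, hqp⟩ := Finset.mem_filter.1 hq
      have hq : q.Prime := (Finset.mem_filter.1 hqS).2.1
      rw [Rat.neg_den, one_div, Rat.inv_natCast_den, if_neg hq.ne_zero,
        Nat.prime_dvd_prime_iff_eq hp hq]
      exact fun h => hqp h.symm
    · rw [← two_mul, hT, ← Finset.sum_filter_add_sum_filter_not S (· = p), Finset.sum_filter,
        Finset.sum_ite_eq']
      simp only [hpS, ne_eq, one_div]
      split_ifs <;> ring
  · by_cases hp2 : p = 2
    · exact ⟨0, by simp [hp.one_lt.ne'], by subst hp2; norm_num [bernoulli_one]⟩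
    · refine ⟨-1 / 2, ?_, ?_⟩
      · rw [show (-1 / 2 : ℚ).den = 2 by norm_num, Nat.prime_dvd_prime_iff_eq hp Nat.prime_two]
        exact hp2
      · have : ¬ (p - 1) ∣ 1 := fun h => hp2 (by
          have := Nat.le_of_dvd one_pos h; have := hp.two_le; omega)
        simp [bernoulli_one, this]

lemma bernoulli_den_eq_one_or (m : ℕ) :
    (bernoulli m).den = 1 ∨ ((Even m ∨ m = 1) ∧ m ≠ 0) := by
  rcases Nat.even_or_odd m with he | ho
  · rcases eq_or_ne m 0 with rfl | hm0
    · simp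
    · exact Or.inr ⟨Or.inl he, hm0⟩
  · rcases eq_or_ne m 1 with rfl | hm1
    · exact Or.inr ⟨Or.inr rfl, one_ne_zero⟩
    · left
      rw [bernoulli_eq_zero_of_odd ho (by have := ho.pos; omega)]
      rfl

lemma not_dvd_den_natCast_mul_bernoulli (hp : p.Prime) (m : ℕ) :
    ¬ p ∣ ((p : ℚ) * bernoulli m).den := by
  rcases bernoulli_den_eq_one_or m with h1 | ⟨hm, hm0⟩
  · intro h
    have := h.trans (Rat.den_natCast_mul_dvd p _)
    rw [h1] at this
    exact hp.one_lt.ne' (Nat.dvd_one.1 this)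
  obtain ⟨x, hx, hB⟩ := exists_bernoulli_eq_sub_inv hp hm hm0
  have hp0 : (p : ℚ) ≠ 0 := by exact_mod_cast hp.ne_zero
  have : (p : ℚ) * bernoulli m = p * x + ((if (p - 1) ∣ m then -1 else 0 : ℤ) : ℚ) := by
    rw [hB]; split_ifs <;> field_simp <;> ring
  rw [this]
  exact Rat.not_dvd_den_add hp (fun h => hx (h.trans (Rat.den_natCast_mul_dvd p x)))
    (Rat.not_dvd_den_intCast hp _)

lemma not_dvd_den_bernoulli (hp : p.Prime) {m : ℕ} (hpm : ¬ (p - 1) ∣ m) :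
    ¬ p ∣ (bernoulli m).den := by
  rcases bernoulli_den_eq_one_or m with h1 | ⟨hm, hm0⟩
  · rw [h1, Nat.dvd_one]
    exact hp.one_lt.ne'
  obtain ⟨x, hx, hB⟩ := exists_bernoulli_eq_sub_inv hp hm hm0
  simpa [hB, hpm] using hx

lemma dvd_den_bernoulli (hp : p.Prime) {m : ℕ} (hm : Even m ∨ m = 1) (hm0 : m ≠ 0)
    (hpm : (p - 1) ∣ m) : p ∣ (bernoulli m).den := by
  obtain ⟨x, hx, hB⟩ := exists_bernoulli_eq_sub_inv hp hm hm0
  rw [if_pos hpm] at hB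
  by_contra h
  have := Rat.not_dvd_den_add hp hx (by rwa [Rat.neg_den] : ¬ p ∣ (-bernoulli m).den)
  rw [hB, neg_sub, add_sub_cancel, Rat.inv_natCast_den, if_neg hp.ne_zero] at this
  exact this dvd_rfl

end BernoulliNumbers

section BernoulliPolynomials

variable {p : ℕ}

lemma coeff_bernoulli_of_le {N i : ℕ} (hi : i ≤ N) :
    (Polynomial.bernoulli N).coeff i = bernoulli (N - i) * N.choose i := by
  rw [Polynomial.coeff_bernoulli, if_pos hi]

lemma not_dvd_den_natCast_mul_coeff_bernoulli (hp : p.Prime) (N i : ℕ) :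
    ¬ p ∣ ((p : ℚ) * (Polynomial.bernoulli N).coeff i).den := by
  rw [Polynomial.coeff_bernoulli]
  split_ifs
  · rw [← mul_assoc]
    exact Rat.not_dvd_den_mul hp (not_dvd_den_natCast_mul_bernoulli hp _)
      (Rat.not_dvd_den_natCast hp _)
  · simpa using Rat.not_dvd_den_intCast hp 0

lemma not_dvd_den_coeff_bernoulli (hp : p.Prime) {N : ℕ} (hN : sd p N < p - 1) (i : ℕ) :
    ¬ p ∣ ((Polynomial.bernoulli N).coeff i).den := by
  rcases le_or_gt i N with hi | hi
  swap
  · rw [Polynomial.coeff_bernoulli, if_neg (by omega)]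
    exact Rat.not_dvd_den_intCast hp 0
  rw [coeff_bernoulli_of_le hi]
  by_cases hm : (p - 1) ∣ (N - i)
  · rcases Nat.eq_zero_or_pos (N - i) with h0 | h0
    · rw [h0, bernoulli_zero, one_mul]
      exact Rat.not_dvd_den_natCast hp _
    have hsd : p - 1 ≤ sd p (N - i) :=
      Nat.le_of_dvd (sd_pos p h0.ne') (((sd_modEq hp.one_lt _).dvd_iff dvd_rfl).2 hm)
    obtain ⟨c, hc⟩ : p ∣ N.choose i := by
      rw [← Nat.choose_symm hi, prime_dvd_choose_iff_sd_lt hp (Nat.sub_le N i)]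
      omega
    rw [hc, Nat.cast_mul, ← mul_assoc, mul_comm _ (p : ℚ)]
    exact Rat.not_dvd_den_mul hp (not_dvd_den_natCast_mul_bernoulli hp _)
      (Rat.not_dvd_den_natCast hp _)
  · exact Rat.not_dvd_den_mul hp (not_dvd_den_bernoulli hp hm)
      (Rat.not_dvd_den_natCast hp _)

lemma exists_dvd_den_coeff_bernoulli (hp : p.Prime) {N : ℕ} (hN : p - 1 ≤ sd p N) :
    ∃ i, p ∣ ((Polynomial.bernoulli N).coeff i).den := by
  obtain ⟨m, hmN, hm, hcarry⟩ := exists_sd_eq_of_le hp.one_lt N hN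
  have hm0 : m ≠ 0 := by
    rintro rfl; rw [sd_zero] at hm; have := hp.two_le; omega
  have hpm : (p - 1) ∣ m := ((sd_modEq hp.one_lt m).dvd_iff dvd_rfl).1 (hm ▸ dvd_rfl)
  have hchoose : ¬ p ∣ N.choose m := by
    rw [prime_dvd_choose_iff_sd_lt hp hmN]; omega
  refine ⟨N - m, ?_⟩
  rw [coeff_bernoulli_of_le (Nat.sub_le N m), Nat.sub_sub_self hmN, Nat.choose_symm hmN, mul_comm]
  exact Rat.dvd_den_natCast_mul hp hchoose
    (dvd_den_bernoulli hp (even_or_eq_one_of_sd_eq_sub_one hp hm) hm0 hpm)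

end BernoulliPolynomials

section PolyDenom

lemma isIntPoly_natCast_smul_iff_lcm_dvd (d : ℕ) (f : Polynomial ℚ) :
    IsIntPoly ((d : ℚ) • f) ↔ (f.support.lcm fun i => (f.coeff i).den) ∣ d := by
  simp only [IsIntPoly, Polynomial.coeff_smul, smul_eq_mul, Rat.den_natCast_mul_eq_one_iff,
    Finset.lcm_dvd_iff]
  refine ⟨fun h i _ => h i, fun h i => ?_⟩
  by_cases hi : i ∈ f.support
  · exact h i hi
  · simp [Polynomial.notMem_support_iff.1 hi]

lemma polyDenom_eq_lcm (f : Polynomial ℚ) :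
    polyDenom f = f.support.lcm fun i => (f.coeff i).den := by
  set L := f.support.lcm fun i => (f.coeff i).den
  have hL : 0 < L ∧ IsIntPoly ((L : ℚ) • f) :=
    ⟨Nat.pos_of_ne_zero (by simp [L, Finset.lcm_eq_zero_iff]),
      (isIntPoly_natCast_smul_iff_lcm_dvd L f).2 dvd_rfl⟩
  refine le_antisymm (Nat.sInf_le hL) ?_
  obtain ⟨hpos, hint⟩ :=
    Nat.sInf_mem (s := {d | 0 < d ∧ IsIntPoly ((d : ℚ) • f)}) ⟨L, hL⟩
  exact Nat.le_of_dvd hpos ((isIntPoly_natCast_smul_iff_lcm_dvd _ f).1 hint)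

lemma isIntPoly_natCast_smul_iff (d : ℕ) (f : Polynomial ℚ) :
    IsIntPoly ((d : ℚ) • f) ↔ polyDenom f ∣ d := by
  rw [polyDenom_eq_lcm, isIntPoly_natCast_smul_iff_lcm_dvd]

lemma polyDenom_dvd_iff {f : Polynomial ℚ} {d : ℕ} :
    polyDenom f ∣ d ↔ ∀ i, (f.coeff i).den ∣ d := by
  simp [← isIntPoly_natCast_smul_iff, IsIntPoly, Rat.den_natCast_mul_eq_one_iff]

lemma den_coeff_dvd_polyDenom (f : Polynomial ℚ) (i : ℕ) : (f.coeff i).den ∣ polyDenom f :=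
  polyDenom_dvd_iff.1 dvd_rfl i

end PolyDenom

def bernoulliDenomPrimes (N : ℕ) : Finset ℕ :=
  (Finset.range (N + 2)).filter fun p => p.Prime ∧ p - 1 ≤ sd p N

lemma mem_bernoulliDenomPrimes {N p : ℕ} :
    p ∈ bernoulliDenomPrimes N ↔ p.Prime ∧ p - 1 ≤ sd p N := by
  rw [bernoulliDenomPrimes, Finset.mem_filter, Finset.mem_range, and_iff_right_iff_imp]
  rintro ⟨-, h⟩
  have := sd_le p N
  omega

theorem polyDenom_bernoulli (N : ℕ) :
    polyDenom (Polynomial.bernoulli N) = ∏ p ∈ bernoulliDenomPrimes N, p := by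
  apply Nat.dvd_antisymm
  · refine polyDenom_dvd_iff.2 fun i => ?_
    rw [← Rat.den_natCast_mul_eq_one_iff, Nat.eq_one_iff_not_exists_prime_dvd]
    intro r hr hdvd
    by_cases hrP : r ∈ bernoulliDenomPrimes N
    · obtain ⟨e, he⟩ := Finset.dvd_prod_of_mem (fun p => p) hrP
      rw [he, Nat.cast_mul, mul_comm (r : ℚ), mul_assoc] at hdvd
      exact not_dvd_den_natCast_mul_coeff_bernoulli hr N i
        (hdvd.trans (Rat.den_natCast_mul_dvd _ _))
    · have hsd : sd r N < r - 1 := by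
        rw [mem_bernoulliDenomPrimes, not_and, not_le] at hrP; exact hrP hr
      exact not_dvd_den_coeff_bernoulli hr hsd i (hdvd.trans (Rat.den_natCast_mul_dvd _ _))
  · refine Finset.prod_primes_dvd _ (fun p hp => (mem_bernoulliDenomPrimes.1 hp).1.prime)
      fun p hp => ?_
    obtain ⟨hp, hpN⟩ := mem_bernoulliDenomPrimes.1 hp
    obtain ⟨i, hi⟩ := exists_dvd_den_coeff_bernoulli hp hpN
    exact hi.trans (den_coeff_dvd_polyDenom _ i)

lemma prod_primes_dvd_iff {s : Finset ℕ} (hs : ∀ p ∈ s, p.Prime) {k : ℕ} (hk : k ≠ 0) :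
    ∏ p ∈ s, p ∣ k ↔ s ⊆ k.primeFactors := by
  simpa [Nat.primeFactors_prod hs] using Nat.prod_primeFactors_dvd_iff (n := ∏ p ∈ s, p) hk

lemma primeFactors_succ_subset_bernoulliDenomPrimes (N : ℕ) :
    (N + 1).primeFactors ⊆ bernoulliDenomPrimes N := by
  intro p hp
  have hp' := Nat.prime_of_mem_primeFactors hp
  exact mem_bernoulliDenomPrimes.2
    ⟨hp', sub_one_le_sd_of_dvd_succ hp'.one_lt (Nat.dvd_of_mem_primeFactors hp)⟩

lemma dhat_succ_eq_one_iff (N : ℕ) :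
    Dhat (N + 1) = 1 ↔ bernoulliDenomPrimes N ⊆ (N + 1).primeFactors := by
  rw [Dhat, Finset.prod_eq_one_iff]
  constructor
  · intro h p hp
    obtain ⟨hp, hpN⟩ := mem_bernoulliDenomPrimes.1 hp
    refine Nat.mem_primeFactors.2
      ⟨hp, by_contra fun hdvd => hp.one_lt.ne' (h p ?_), N.succ_ne_zero⟩
    have hsd := sd_succ_of_not_dvd hp.one_lt hdvd
    have := sd_le p (N + 1)
    exact Finset.mem_filter.2 ⟨Finset.mem_range.2 (by omega), hp, hdvd, by omega⟩
  · intro h p hp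
    obtain ⟨-, hp, hdvd, hsd⟩ := Finset.mem_filter.1 hp
    rw [sd_succ_of_not_dvd hp.one_lt hdvd] at hsd
    have := h (mem_bernoulliDenomPrimes.2 ⟨hp, by omega⟩)
    exact absurd (Nat.dvd_of_mem_primeFactors this) hdvd

lemma prime_add_two_of_bernoulliDenomPrimes_subset {N : ℕ}
    (h : bernoulliDenomPrimes N ⊆ (N + 1).primeFactors) : (N + 2).Prime := by
  by_contra hN
  obtain ⟨q, hq, ⟨a, ha⟩, hqlt⟩ : ∃ q, q.Prime ∧ q ∣ N + 2 ∧ q < N + 2 :=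
    ⟨(N + 2).minFac, Nat.minFac_prime (by omega), Nat.minFac_dvd _,
      (Nat.not_prime_iff_minFac_lt (by omega)).1 hN⟩
  have hq1 := hq.one_lt
  have ha2 : 2 ≤ a := by
    by_contra! h
    have := Nat.mul_le_mul_left q (show a ≤ 1 by omega)
    omega
  have hqN : ¬ q ∣ N + 1 := fun hd =>
    hq1.ne' (Nat.dvd_one.1 ((Nat.dvd_add_right hd).1 (show q ∣ N + 1 + 1 from ⟨a, ha⟩)))
  have hsd : sd q (N + 1) = (q - 1) + sd q (a - 1) := by
    have hqa : q * (a - 1) + q = q * a := by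
      rw [← Nat.mul_succ, Nat.succ_eq_add_one, Nat.sub_add_cancel (by omega)]
    rw [← sd_add_mul hq1 (by omega)]
    congr 1
    omega
  have := sd_pos q (show a - 1 ≠ 0 by omega)
  rw [sd_succ_of_not_dvd hq1 hqN] at hsd
  exact hqN (Nat.dvd_of_mem_primeFactors (h (mem_bernoulliDenomPrimes.2 ⟨hq, by omega⟩)))

/-- For `n ≥ 1`, `B'_n(x) ∈ ℤ[x] ↔ D̂ n = 1 ↔ DB_{n-1} = rad n`;
moreover in these cases `n + 1` is prime. -/
theorem stmt_7 (n : ℕ) (hn : 1 ≤ n) :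
    (IsIntPoly (Polynomial.derivative (Polynomial.bernoulli n)) ↔ Dhat n = 1) ∧
    (Dhat n = 1 ↔ DB (n - 1) = rad n) ∧
    (IsIntPoly (Polynomial.derivative (Polynomial.bernoulli n)) → (n + 1).Prime) := by
  obtain ⟨N, rfl⟩ := Nat.exists_eq_add_of_le' hn
  have hprimes : ∀ p ∈ bernoulliDenomPrimes N, p.Prime := fun p hp =>
    (mem_bernoulliDenomPrimes.1 hp).1
  have hder : Polynomial.derivative (Polynomial.bernoulli (N + 1)) =
      ((N + 1 : ℕ) : ℚ) • Polynomial.bernoulli N := by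
    rw [Polynomial.derivative_bernoulli_add_one, Polynomial.smul_eq_C_mul]
    simp
  have hint : IsIntPoly (Polynomial.derivative (Polynomial.bernoulli (N + 1))) ↔
      bernoulliDenomPrimes N ⊆ (N + 1).primeFactors := by
    rw [hder, isIntPoly_natCast_smul_iff, polyDenom_bernoulli,
      prod_primes_dvd_iff hprimes N.succ_ne_zero]
  have hrad : DB N = rad (N + 1) ↔ bernoulliDenomPrimes N ⊆ (N + 1).primeFactors := by
    rw [DB, polyDenom_bernoulli, rad]
    refine ⟨fun h => ?_, fun h => ?_⟩
    · rw [← Nat.primeFactors_prod hprimes, h, Nat.primeFactors_prod_primeFactors]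
    · rw [h.antisymm (primeFactors_succ_subset_bernoulliDenomPrimes N)]
  rw [hint, dhat_succ_eq_one_iff, Nat.add_sub_cancel, hrad]
  exact ⟨Iff.rfl, Iff.rfl, prime_add_two_of_bernoulliDenomPrimes_subset⟩
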